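/- arXiv:2505.03986 — 3 statements merged into one kernel-verified Lean document; each statement's English description precedes it below -/
import Mathlib

section
/- The chordal cubic threefold X = {x1*x4^2 + x2^2*x5 - x1*x3*x5 - 2*x2*x3*x4 + x3^3 = 0} in P^4 over an algebraically closed field of characteristic zero is singular precisely along the image of the rational normal quartic curve [1:t:t^2:t^3:t^4] (together with [0:0:0:0:1]); i.e., a point p of X is a singular point of X if and only if p lies on this curve. -/
/-!
Away from the hyperplane `x1 = 0`, the partials `∂F/∂x5`, `∂F/∂x4`, `∂F/∂x3` are linear in
`x3`, `x4`, `x5` respectively, and solving them in turn gives `x1^(i-1) xi = x2^(i-1)`, i.e. the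
point `[1 : t : t^2 : t^3 : t^4]` with `t = x2 / x1`. On `x1 = 0` the partials force
`x2 = x3 = x4 = 0`, leaving `[0 : 0 : 0 : 0 : 1]`. Conversely, the partials vanish identically
along the quartic.
-/

section ChordalCubic

variable {R : Type*} [CommRing R]

def rationalNormalQuartic (s t : R) : Fin 5 → R :=
  ![s ^ 4, s ^ 3 * t, s ^ 2 * t ^ 2, s * t ^ 3, t ^ 4]

/-- The partial derivatives `∂F/∂x1, …, ∂F/∂x5` of
`F = x1*x4^2 + x2^2*x5 - x1*x3*x5 - 2*x2*x3*x4 + x3^3` all vanish at `v`, where `xi = v (i - 1)`. -/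
def IsChordalCubicCritical (v : Fin 5 → R) : Prop :=
  (v 3)^2 - v 2 * v 4 = 0 ∧
  2 * v 1 * v 4 - 2 * v 2 * v 3 = 0 ∧
  -(v 0 * v 4) - 2 * v 1 * v 3 + 3 * (v 2)^2 = 0 ∧
  2 * v 0 * v 3 - 2 * v 1 * v 2 = 0 ∧
  (v 1)^2 - v 0 * v 2 = 0

theorem isChordalCubicCritical_smul_rationalNormalQuartic (lam s t : R) :
    IsChordalCubicCritical (lam • rationalNormalQuartic s t) := by
  refine ⟨?_, ?_, ?_, ?_, ?_⟩ <;>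
    simp only [rationalNormalQuartic, Pi.smul_apply, smul_eq_mul, Matrix.cons_val_zero,
      Matrix.cons_val_one, Matrix.cons_val_two, Matrix.cons_val_three, Matrix.cons_val_four,
      Matrix.head_cons, Matrix.tail_cons] <;>
    ring

end ChordalCubic

namespace IsChordalCubicCritical

variable {k : Type*} [Field k] {v : Fin 5 → k}

theorem eq_smul_rationalNormalQuartic_one_div (h2 : (2 : k) ≠ 0) (h : IsChordalCubicCritical v)
    (h0 : v 0 ≠ 0) : v = v 0 • rationalNormalQuartic 1 (v 1 / v 0) := by
  obtain ⟨-, -, d3, d4, d5⟩ := h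
  have e2 : v 0 * v 2 = v 1 ^ 2 := by linear_combination -d5
  have d4' : v 0 * v 3 = v 1 * v 2 := mul_left_cancel₀ h2 (by linear_combination d4)
  have e3 : v 0 ^ 2 * v 3 = v 1 ^ 3 := by linear_combination v 0 * d4' + v 1 * e2
  have e4 : v 0 ^ 3 * v 4 = v 1 ^ 4 := by
    linear_combination -(v 0 ^ 2) * d3 - 2 * v 1 * e3 + 3 * (v 0 * v 2 + v 1 ^ 2) * e2
  funext i
  fin_cases i <;>
    simp only [Fin.zero_eta, Fin.mk_one, Fin.reduceFinMk, Fin.isValue, rationalNormalQuartic,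
      one_pow, one_mul, mul_one, Pi.smul_apply, smul_eq_mul, Matrix.cons_val_zero,
      Matrix.cons_val_one, Matrix.cons_val] <;>
    field_simp
  · linear_combination e2
  · linear_combination e3
  · linear_combination e4

theorem eq_smul_rationalNormalQuartic_zero_one (h3 : (3 : k) ≠ 0) (h : IsChordalCubicCritical v)
    (h0 : v 0 = 0) : v = v 4 • rationalNormalQuartic 0 1 := by
  obtain ⟨d1, -, d3, -, d5⟩ := h
  have hv1 : v 1 = 0 := pow_eq_zero_iff two_ne_zero |>.mp <| by linear_combination d5 + v 2 * h0
  have hv2 : v 2 = 0 := by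
    have : 3 * v 2 ^ 2 = 0 := by linear_combination d3 + v 4 * h0 + 2 * v 3 * hv1
    exact pow_eq_zero_iff two_ne_zero |>.mp <| (mul_eq_zero.mp this).resolve_left h3
  have hv3 : v 3 = 0 := pow_eq_zero_iff two_ne_zero |>.mp <| by linear_combination d1 + v 4 * hv2
  funext i
  fin_cases i <;> simp [rationalNormalQuartic, h0, hv1, hv2, hv3]

end IsChordalCubicCritical

theorem chordal_cubic_singular_locus_general (k : Type*) [Field k] [CharZero k]
    (v : Fin 5 → k) (hv : v ≠ 0) :
    ((v 3)^2 - v 2 * v 4 = 0 ∧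
     2 * v 1 * v 4 - 2 * v 2 * v 3 = 0 ∧
     -(v 0 * v 4) - 2 * v 1 * v 3 + 3 * (v 2)^2 = 0 ∧
     2 * v 0 * v 3 - 2 * v 1 * v 2 = 0 ∧
     (v 1)^2 - v 0 * v 2 = 0)
    ↔ ∃ s t : k, (s ≠ 0 ∨ t ≠ 0) ∧ ∃ lam : k, lam ≠ 0 ∧
        v = lam • ![s^4, s^3 * t, s^2 * t^2, s * t^3, t^4] := by
  change IsChordalCubicCritical v ↔
    ∃ s t : k, (s ≠ 0 ∨ t ≠ 0) ∧ ∃ lam : k, lam ≠ 0 ∧ v = lam • rationalNormalQuartic s t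
  refine ⟨fun h => ?_, ?_⟩
  · by_cases h0 : v 0 = 0
    · have hv_eq := h.eq_smul_rationalNormalQuartic_zero_one three_ne_zero h0
      have hv4 : v 4 ≠ 0 := fun h4 => hv (by rw [hv_eq, h4, zero_smul])
      exact ⟨0, 1, Or.inr one_ne_zero, v 4, hv4, hv_eq⟩
    · exact ⟨1, v 1 / v 0, Or.inl one_ne_zero, v 0, h0,
        h.eq_smul_rationalNormalQuartic_one_div two_ne_zero h0⟩
  · rintro ⟨s, t, -, lam, -, rfl⟩
    exact isChordalCubicCritical_smul_rationalNormalQuartic lam s t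

/-- The chordal cubic threefold `x1*x4^2 + x2^2*x5 - x1*x3*x5 - 2*x2*x3*x4 + x3^3 = 0`
in `ℙ^4` over an algebraically closed field of characteristic zero is singular precisely
along the rational normal quartic curve `[s^4 : s^3 t : s^2 t^2 : s t^3 : t^4]`. -/
theorem chordal_cubic_singular_locus (k : Type*) [Field k] [IsAlgClosed k] [CharZero k]
    (v : Fin 5 → k) (hv : v ≠ 0)
    (hX : v 0 * (v 3)^2 + (v 1)^2 * v 4 - v 0 * v 2 * v 4
      - 2 * v 1 * v 2 * v 3 + (v 2)^3 = 0) :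
    ((v 3)^2 - v 2 * v 4 = 0 ∧
     2 * v 1 * v 4 - 2 * v 2 * v 3 = 0 ∧
     -(v 0 * v 4) - 2 * v 1 * v 3 + 3 * (v 2)^2 = 0 ∧
     2 * v 0 * v 3 - 2 * v 1 * v 2 = 0 ∧
     (v 1)^2 - v 0 * v 2 = 0)
    ↔ ∃ s t : k, (s ≠ 0 ∨ t ≠ 0) ∧ ∃ lam : k, lam ≠ 0 ∧
        v = lam • ![s^4, s^3 * t, s^2 * t^2, s * t^3, t^4] :=
  chordal_cubic_singular_locus_general k v hv
end

section
/- The map [x1:...:x5] ↦ [y1:...:y6] = [x1 : x2 : x3 : x4 : x5 : (x3*x4 + e1*x4*x5 + e2*x5^2)/x5] sends the cubic X = {x3*x4^2 + (x1*x2+x3^2)*x5 + e1*x4^2*x5 + e2*x4*x5^2 + e3*x5^3 = 0} (on the locus x5 ≠ 0) into the complete intersection of two quadrics X_{2,2} ⊂ P^5 defined by y3*y4 + e1*y4*y5 + e2*y5^2 - y5*y6 = 0 and y1*y2 + y3^2 + e3*y5^2 + y4*y6 = 0. -/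
/-- The unprojection map `[x1:...:x5] ↦ [x1 : x2 : x3 : x4 : x5 : y6]` with
`y6 = (x3*x4 + e1*x4*x5 + e2*x5^2)/x5` sends the cubic
`X = {x3*x4^2 + (x1*x2+x3^2)*x5 + e1*x4^2*x5 + e2*x4*x5^2 + e3*x5^3 = 0}` (where `x5 ≠ 0`)
into the complete intersection of two quadrics
`y3*y4 + e1*y4*y5 + e2*y5^2 - y5*y6 = 0` and `y1*y2 + y3^2 + e3*y5^2 + y4*y6 = 0`. -/
theorem unprojection_into_quadric_intersection (k : Type*) [Field k] (e1 e2 e3 : k)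
    (x1 x2 x3 x4 x5 : k) (hx5 : x5 ≠ 0)
    (hX : x3 * x4^2 + (x1 * x2 + x3^2) * x5
      + e1 * x4^2 * x5 + e2 * x4 * x5^2 + e3 * x5^3 = 0) :
    x3 * x4 + e1 * x4 * x5 + e2 * x5^2
        - x5 * ((x3 * x4 + e1 * x4 * x5 + e2 * x5^2) / x5) = 0 ∧
    x1 * x2 + x3^2 + e3 * x5^2
        + x4 * ((x3 * x4 + e1 * x4 * x5 + e2 * x5^2) / x5) = 0 := by
  set y6 := (x3 * x4 + e1 * x4 * x5 + e2 * x5^2) / x5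
  have hy6 : x5 * y6 = x3 * x4 + e1 * x4 * x5 + e2 * x5^2 := mul_div_cancel₀ _ hx5
  refine ⟨by rw [hy6, sub_self], ?_⟩
  -- Once `x5 * y6` is substituted, `x5` times the second quadric is the cubic equation of `X`.
  have h : x5 * (x1 * x2 + x3^2 + e3 * x5^2 + x4 * y6) = 0 := by
    linear_combination hX + x4 * hy6
  exact (mul_eq_zero.mp h).resolve_left hx5
end

section
/- Let X_{2,2} ⊂ P^5 be the complete intersection y4^2 + e1*y5^2 - y5*y6 = 0, y1*y2 + y3^2 + e2*y5^2 + y4*y6 = 0. Then the locus {y1*y2 + y3^2 = 0, y4 = y5 = y6 = 0}, a smooth conic, is contained in the singular locus of X_{2,2} (every point of it is a singular point of the intersection of the two quadrics). -/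
/-- For the complete intersection `X_{2,2} ⊂ ℙ^5` given by `y4^2 + e1*y5^2 - y5*y6 = 0`
and `y1*y2 + y3^2 + e2*y5^2 + y4*y6 = 0`, every point of the smooth conic
`{y1*y2 + y3^2 = 0, y4 = y5 = y6 = 0}` lies on `X_{2,2}` and is a singular point of it:
the `2×6` Jacobian matrix of the two quadrics has rank `≤ 1` there. -/
theorem conic_in_singular_locus_of_quadric_intersection
    (k : Type*) [Field k] [IsAlgClosed k] [CharZero k] (e1 e2 : k)
    (v : Fin 6 → k) (hv : v ≠ 0)
    (hC : v 0 * v 1 + (v 2)^2 = 0) (h4 : v 3 = 0) (h5 : v 4 = 0) (h6 : v 5 = 0) :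
    ((v 3)^2 + e1 * (v 4)^2 - v 4 * v 5 = 0) ∧
    (v 0 * v 1 + (v 2)^2 + e2 * (v 4)^2 + v 3 * v 5 = 0) ∧
    (Matrix.of
      ![![(0 : k), 0, 0, 2 * v 3, 2 * e1 * v 4 - v 5, -(v 4)],
        ![v 1, v 0, 2 * v 2, v 5, 2 * e2 * v 4, v 3]]).rank ≤ 1 := by
  refine ⟨by simp [h4, h5, h6], by simp [h4, h5, h6, hC], ?_⟩
  have hEq : (Matrix.of
      ![![(0 : k), 0, 0, 2 * v 3, 2 * e1 * v 4 - v 5, -(v 4)],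
        ![v 1, v 0, 2 * v 2, v 5, 2 * e2 * v 4, v 3]]) =
      (Matrix.of ![![(0:k)], ![1]]) * (Matrix.of ![![v 1, v 0, 2 * v 2, 0, 0, 0]]) := by
    ext i j
    fin_cases i <;> fin_cases j <;>
      simp [Matrix.mul_apply, h4, h5, h6, Fin.sum_univ_succ, Matrix.cons_val_fin_one] <;> rfl
  rw [hEq]
  calc ((Matrix.of ![![(0:k)], ![1]]) * (Matrix.of ![![v 1, v 0, 2 * v 2, 0, 0, 0]])).rank
      ≤ (Matrix.of ![![v 1, v 0, 2 * v 2, 0, 0, 0]]).rank := Matrix.rank_mul_le_right _ _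
    _ ≤ 1 := by simpa using Matrix.rank_le_card_height (Matrix.of ![![v 1, v 0, 2 * v 2, 0, 0, 0]])
end
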